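/- arXiv:1910.00320 — 6 statements merged into one kernel-verified Lean document; each statement's English description precedes it below -/
import Mathlib

section
/- Let δ be a log-distance and ℬ a family of branches such that for any branch E there exists W₀ ∈ ℬ with δ(E,ℬ) = δ(E,W₀), where δ(E,ℬ) := sup{δ(E,W) : W ∈ ℬ}. If C is a curve with r > 1 branches C₁,...,Cᵣ and δ(C,ℬ) := sup{min_i δ(Cᵢ,W) : W ∈ ℬ}, then δ(C,ℬ) = min{ min_i δ(Cᵢ,ℬ), min_{i≠j} δ(Cᵢ,Cⱼ) }. -/
open ENNReal

/-- Theorem 2.3 (principal): if `ℬ` satisfies the maximal-contact condition (*),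
and `C` is a curve with `r > 1` branches, then
`δ(C,ℬ) = min { min_i δ(Cᵢ,ℬ), min_{i≠j} δ(Cᵢ,Cⱼ) }`. -/
theorem logDist_curve_family {B : Type*} (δ : B → B → ℝ≥0∞)
    (hδ1 : ∀ C D, δ C D = ⊤ ↔ C = D)
    (hδ2 : ∀ C D, δ C D = δ D C)
    (hδ3 : ∀ C D E, min (δ C E) (δ E D) ≤ δ C D)
    (ℬ : Set B)
    (hstar : ∀ E : B, ∃ W₀ ∈ ℬ, (⨆ W ∈ ℬ, δ E W) = δ E W₀)
    {r : ℕ} (hr : 1 < r) (C : Fin r → B) (hC : Function.Injective C) :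
    (⨆ W ∈ ℬ, ⨅ i, δ (C i) W) =
      min (⨅ i, ⨆ W ∈ ℬ, δ (C i) W) (⨅ (i) (j) (_ : i ≠ j), δ (C i) (C j)) := by
  apply le_antisymm
  · refine iSup₂_le fun W hW => le_min ?_ ?_
    · exact le_iInf fun i =>
        le_trans (iInf_le _ i) (le_iSup₂ (f := fun W _ => δ (C i) W) W hW)
    · refine le_iInf fun i => le_iInf fun j => le_iInf fun hij => ?_
      calc ⨅ k, δ (C k) W ≤ min (δ (C i) W) (δ (C j) W) :=
              le_min (iInf_le _ i) (iInf_le _ j)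
        _ = min (δ (C i) W) (δ W (C j)) := by rw [hδ2 W (C j)]
        _ ≤ δ (C i) (C j) := hδ3 _ _ _
  · have i0 : Fin r := ⟨0, by omega⟩
    obtain ⟨W₀, hW₀, hEq⟩ := hstar (C i0)
    refine le_trans ?_ (le_iSup₂ (f := fun W _ => ⨅ i, δ (C i) W) W₀ hW₀)
    refine le_iInf fun j => ?_
    have h2 : min (⨅ i, ⨆ W ∈ ℬ, δ (C i) W) (⨅ (i) (j) (_ : i ≠ j), δ (C i) (C j))
        ≤ δ (C i0) W₀ := by
      calc _ ≤ ⨅ i, ⨆ W ∈ ℬ, δ (C i) W := min_le_left _ _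
        _ ≤ ⨆ W ∈ ℬ, δ (C i0) W := iInf_le _ i0
        _ = δ (C i0) W₀ := hEq
    by_cases hj : j = i0
    · subst hj; exact h2
    · have h1 : min (⨅ i, ⨆ W ∈ ℬ, δ (C i) W) (⨅ (i) (j) (_ : i ≠ j), δ (C i) (C j))
          ≤ δ (C j) (C i0) :=
        le_trans (min_le_right _ _)
          (le_trans (iInf_le _ j) (le_trans (iInf_le _ i0) (iInf_le _ hj)))
      calc _ ≤ min (δ (C j) (C i0)) (δ (C i0) W₀) := le_min h1 h2
        _ ≤ δ (C j) W₀ := hδ3 _ _ _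
end

section
/- Let δ be a log-distance and ℬ a family of branches satisfying condition (*). Let C, D be branches such that no single branch of ℬ has maximal δ-contact with both C and D. If U ∈ ℬ has maximal δ-contact with C and V ∈ ℬ has maximal δ-contact with D, then δ(C,D) = δ(U,V) < min{δ(C,ℬ), δ(D,ℬ)}. -/
open ENNReal

/-- If no single branch of `ℬ` has maximal `δ`-contact with both `C` and `D`, and
`U ∈ ℬ` has maximal `δ`-contact with `C` while `V ∈ ℬ` has maximal `δ`-contact
with `D`, then `δ(C,D) = δ(U,V) < min{δ(C,ℬ), δ(D,ℬ)}`. -/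
theorem logDist_of_no_common_maximal_contact {B : Type*} (δ : B → B → ℝ≥0∞)
    (hδ1 : ∀ C D, δ C D = ⊤ ↔ C = D)
    (hδ2 : ∀ C D, δ C D = δ D C)
    (hδ3 : ∀ C D E, min (δ C E) (δ E D) ≤ δ C D)
    (ℬ : Set B)
    (hstar : ∀ E : B, ∃ W₀ ∈ ℬ, (⨆ W ∈ ℬ, δ E W) = δ E W₀)
    (C D : B)
    (hnocommon : ¬ ∃ W ∈ ℬ,
      δ C W = (⨆ W' ∈ ℬ, δ C W') ∧ δ D W = (⨆ W' ∈ ℬ, δ D W'))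
    (U V : B) (hU : U ∈ ℬ) (hV : V ∈ ℬ)
    (hUC : δ C U = (⨆ W ∈ ℬ, δ C W)) (hVD : δ D V = (⨆ W ∈ ℬ, δ D W)) :
    δ C D = δ U V ∧ δ U V < min (⨆ W ∈ ℬ, δ C W) (⨆ W ∈ ℬ, δ D W) := by
  set a := ⨆ W ∈ ℬ, δ C W with ha
  set b := ⨆ W ∈ ℬ, δ D W with hb
  have hCVle : δ C V ≤ a := by
    rw [ha]; exact le_iSup₂ (f := fun W _ => δ C W) V hV
  have hDUle : δ D U ≤ b := by
    rw [hb]; exact le_iSup₂ (f := fun W _ => δ D W) U hU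
  have hCV : δ C V < a := lt_of_le_of_ne hCVle fun h => hnocommon ⟨V, hV, h, hVD⟩
  have hDU : δ D U < b := lt_of_le_of_ne hDUle fun h => hnocommon ⟨U, hU, hUC, h⟩
  -- δ U V < a
  have hUVa : δ U V < a := by
    by_contra h
    push_neg at h
    have h1 := hδ3 C V U
    rw [hUC, min_eq_left h] at h1
    exact absurd h1 hCV.not_ge
  -- δ U V < b
  have hUVb : δ U V < b := by
    by_contra h
    push_neg at h
    have h1 := hδ3 D U V
    rw [hVD, hδ2 V U, min_eq_left h] at h1
    exact absurd h1 hDU.not_ge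
  -- δ C D < a
  have hCDa : δ C D < a := by
    by_contra h
    push_neg at h
    have h1 := hδ3 D U C
    rw [hδ2 D C, hUC, min_eq_right h] at h1
    have hab : a < b := lt_of_le_of_lt h1 hDU
    have h2 := hδ3 C V D
    rw [hVD] at h2
    exact absurd (le_trans (le_min h hab.le) h2) hCV.not_ge
  -- δ C D < b
  have hCDb : δ C D < b := by
    by_contra h
    push_neg at h
    have h2 := hδ3 C V D
    rw [hVD, min_eq_right h] at h2
    have hba : b < a := lt_of_le_of_lt h2 hCV
    have h1 := hδ3 D U C
    rw [hδ2 D C, hUC] at h1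
    exact absurd (le_trans (le_min h hba.le) h1) hDU.not_ge
  -- δ C D ≤ δ U V
  have hle1 : δ C D ≤ δ U V := by
    have h1 := hδ3 C V D
    rw [hVD, min_eq_left hCDb.le] at h1
    have h2 := hδ3 U V C
    rw [hδ2 U C, hUC] at h2
    exact le_trans (le_min hCDa.le h1) h2
  -- δ U V ≤ δ C D
  have hle2 : δ U V ≤ δ C D := by
    have h1 := hδ3 U D V
    rw [hδ2 V D, hVD, min_eq_left hUVb.le] at h1
    have h2 := hδ3 C D U
    rw [hUC] at h2
    exact le_trans (le_min hUVa.le h1) h2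
  exact ⟨le_antisymm hle1 hle2, lt_min hUVa hUVb⟩
end

section
/- Let C be a reduced plane curve with r > 1 branches C₁,...,Cᵣ and D a branch. Then d(C,D) ≤ (C,D)₀ / (m(C)·m(D)), with equality whenever d(C,D) < min_{i≠j} d(Cᵢ,Cⱼ). -/
open ENNReal

/-- An abstract system of plane branches: each branch has a multiplicity and any
two branches have an intersection number (infinite exactly for equal branches). -/
structure BranchSystem where
  Branch : Type
  /-- intersection number `(a,b)₀` -/
  im : Branch → Branch → ℝ≥0∞
  /-- multiplicity `m(b)` -/
  mult : Branch → ℕ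
  mult_pos : ∀ b, 0 < mult b
  im_symm : ∀ a b, im a b = im b a
  im_top_iff : ∀ a b, im a b = ⊤ ↔ a = b
  im_ge : ∀ a b, (mult a : ℝ≥0∞) * (mult b : ℝ≥0∞) ≤ im a b

namespace BranchSystem

variable (S : BranchSystem)

/-- The order of contact `d(a,b) = (a,b)₀ / (m(a)m(b))` of two branches. -/
noncomputable def d (a b : S.Branch) : ℝ≥0∞ :=
  S.im a b / ((S.mult a : ℝ≥0∞) * (S.mult b : ℝ≥0∞))

/-- A branch is smooth iff its multiplicity is `1`. -/
def Smooth (b : S.Branch) : Prop := S.mult b = 1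

/-- Contact of a curve with branches `C i` with a branch `W`: `min_i d(Cᵢ,W)`. -/
noncomputable def dC {r : ℕ} (C : Fin r → S.Branch) (W : S.Branch) : ℝ≥0∞ :=
  ⨅ i, S.d (C i) W

/-- Contact exponent of a curve: `sup` of contacts with smooth branches. -/
noncomputable def dExpC {r : ℕ} (C : Fin r → S.Branch) : ℝ≥0∞ :=
  ⨆ W, ⨆ _ : S.Smooth W, S.dC C W

/-- Contact exponent of a single branch. -/
noncomputable def dExp (b : S.Branch) : ℝ≥0∞ :=
  ⨆ W, ⨆ _ : S.Smooth W, S.d b W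

/-- `d` is a log-distance (ultrametric inequality). -/
def Ultra : Prop := ∀ a b e, min (S.d a e) (S.d e b) ≤ S.d a b

/-- Multiplicity `m(C) = Σᵢ m(Cᵢ)` of a curve. -/
def multC {r : ℕ} (C : Fin r → S.Branch) : ℕ := ∑ i, S.mult (C i)

/-- Intersection number `(C,W)₀ = Σᵢ (Cᵢ,W)₀` of a curve with a branch. -/
noncomputable def imC {r : ℕ} (C : Fin r → S.Branch) (W : S.Branch) : ℝ≥0∞ :=
  ∑ i, S.im (C i) W

/-- Milnor number of a curve with branches `C i`, via
`μ(C) + r − 1 = Σᵢ μ(Cᵢ) + 2 Σ_{i<j} (Cᵢ,Cⱼ)₀`, where `μb` gives the Milnor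
numbers (conductors of the semigroups) of the individual branches. -/
noncomputable def muC (μb : S.Branch → ℕ) {r : ℕ} (C : Fin r → S.Branch) : ℝ≥0∞ :=
  (∑ i, (μb (C i) : ℝ≥0∞)) + (∑ i, ∑ j, if i ≠ j then S.im (C i) (C j) else 0)
    - ((r : ℝ≥0∞) - 1)

end BranchSystem

open BranchSystem

/-
Writing `(Cᵢ,D)₀ = m(Cᵢ) m(D) d(Cᵢ,D)` and summing over `i` bounds `(C,D)₀` below by
`m(C) m(D) d(C,D)`. For equality, let `Cᵢ` realise the minimum `d(C,D)`. For any other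
branch `Cⱼ` we have `d(Cᵢ,Cⱼ) > d(C,D)`, so the ultrametric inequality
`min (d(Cᵢ,Cⱼ), d(Cⱼ,D)) ≤ d(Cᵢ,D)` forces `d(Cⱼ,D) = d(C,D)`: all branches have the
same contact with `D`, and the sum becomes `m(C) m(D) d(C,D)`.
-/

namespace BranchSystem

variable (S : BranchSystem)

theorem mult_mul_mult_ne_zero (a b : S.Branch) :
    (S.mult a : ℝ≥0∞) * S.mult b ≠ 0 :=
  mul_ne_zero (by exact_mod_cast (S.mult_pos a).ne') (by exact_mod_cast (S.mult_pos b).ne')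

theorem im_eq_mult_mul_d (a b : S.Branch) :
    S.im a b = (S.mult a : ℝ≥0∞) * S.mult b * S.d a b :=
  (ENNReal.mul_div_cancel (S.mult_mul_mult_ne_zero a b)
    (ENNReal.mul_ne_top (natCast_ne_top _) (natCast_ne_top _))).symm

variable {S} {r : ℕ} (C : Fin r → S.Branch) (D : S.Branch)

theorem dC_le_d (i : Fin r) : S.dC C D ≤ S.d (C i) D :=
  iInf_le _ i

theorem multC_mul_mult_ne_zero (hr : 0 < r) : (S.multC C : ℝ≥0∞) * S.mult D ≠ 0 := by
  have hC : 0 < S.multC C :=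
    Finset.sum_pos (fun i _ => S.mult_pos (C i)) ⟨⟨0, hr⟩, Finset.mem_univ _⟩
  exact mul_ne_zero (by exact_mod_cast hC.ne') (by exact_mod_cast (S.mult_pos D).ne')

theorem multC_mul_mult_eq_sum :
    (S.multC C : ℝ≥0∞) * S.mult D = ∑ i, (S.mult (C i) : ℝ≥0∞) * S.mult D := by
  rw [multC, Nat.cast_sum, Finset.sum_mul]

theorem multC_mul_mult_mul_dC_le_imC :
    (S.multC C : ℝ≥0∞) * S.mult D * S.dC C D ≤ S.imC C D := by
  rw [multC_mul_mult_eq_sum, Finset.sum_mul, imC]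
  refine Finset.sum_le_sum fun i _ => ?_
  rw [S.im_eq_mult_mul_d]
  exact mul_le_mul_right (dC_le_d C D i) _

theorem imC_eq_of_forall_d_eq {t : ℝ≥0∞} (h : ∀ i, S.d (C i) D = t) :
    S.imC C D = (S.multC C : ℝ≥0∞) * S.mult D * t := by
  simp only [imC, S.im_eq_mult_mul_d, h, multC_mul_mult_eq_sum, Finset.sum_mul]

theorem d_eq_dC_of_dC_lt_iInf_d (hU : S.Ultra) (hr : 0 < r)
    (hsep : S.dC C D < ⨅ (i) (j) (_ : i ≠ j), S.d (C i) (C j)) (j : Fin r) :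
    S.d (C j) D = S.dC C D := by
  have : Nonempty (Fin r) := ⟨⟨0, hr⟩⟩
  obtain ⟨i, hi⟩ := Finite.exists_min fun i => S.d (C i) D
  have hdC : S.dC C D = S.d (C i) D := le_antisymm (dC_le_d C D i) (le_iInf hi)
  refine le_antisymm ?_ (dC_le_d C D j)
  rcases eq_or_ne i j with rfl | hij
  · exact hdC.ge
  have hsep_ij : S.dC C D < S.d (C i) (C j) :=
    hsep.trans_le (iInf₂_le_of_le i j (iInf_le _ hij))
  have hultra := hU (C i) D (C j)
  rw [← hdC] at hultra
  exact (min_le_iff.mp hultra).resolve_left hsep_ij.not_ge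

end BranchSystem

theorem dC_le_imC_div_general (S : BranchSystem) (hU : S.Ultra)
    {r : ℕ} (hr : 1 < r) (C : Fin r → S.Branch)
    (D : S.Branch) :
    S.dC C D ≤ S.imC C D / ((S.multC C : ℝ≥0∞) * (S.mult D : ℝ≥0∞)) ∧
      (S.dC C D < (⨅ (i) (j) (_ : i ≠ j), S.d (C i) (C j)) →
        S.dC C D = S.imC C D / ((S.multC C : ℝ≥0∞) * (S.mult D : ℝ≥0∞))) := by
  have hr₀ : 0 < r := one_pos.trans hr
  have hK0 := multC_mul_mult_ne_zero C D hr₀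
  have hKtop : (S.multC C : ℝ≥0∞) * S.mult D ≠ ⊤ :=
    ENNReal.mul_ne_top (natCast_ne_top _) (natCast_ne_top _)
  refine ⟨?_, fun hsep => ?_⟩
  · rw [ENNReal.le_div_iff_mul_le (.inl hK0) (.inl hKtop), mul_comm]
    exact multC_mul_mult_mul_dC_le_imC C D
  · rw [ENNReal.eq_div_iff hK0 hKtop,
      imC_eq_of_forall_d_eq C D (d_eq_dC_of_dC_lt_iInf_d C D hU hr₀ hsep)]

/-- Lemma 3.1: for a curve `C` with `r > 1` branches and a branch `D`,
`d(C,D) ≤ (C,D)₀/(m(C)m(D))`, with equality whenever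
`d(C,D) < min_{i≠j} d(Cᵢ,Cⱼ)`. -/
theorem dC_le_imC_div (S : BranchSystem) (hU : S.Ultra)
    {r : ℕ} (hr : 1 < r) (C : Fin r → S.Branch) (hC : Function.Injective C)
    (D : S.Branch) :
    S.dC C D ≤ S.imC C D / ((S.multC C : ℝ≥0∞) * (S.mult D : ℝ≥0∞)) ∧
      (S.dC C D < (⨅ (i) (j) (_ : i ≠ j), S.d (C i) (C j)) →
        S.dC C D = S.imC C D / ((S.multC C : ℝ≥0∞) * (S.mult D : ℝ≥0∞))) :=
  dC_le_imC_div_general S hU hr C D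
end

section
/- Let C be a reduced curve with branches C₁,...,Cᵣ. Then d(C) < min_i d(Cᵢ) if and only if d(C) is an integer. -/
open ENNReal

open BranchSystem

section Aux

variable (S : BranchSystem)

lemma aux_d_symm (a b : S.Branch) : S.d a b = S.d b a := by
  unfold BranchSystem.d; rw [S.im_symm, mul_comm]

lemma aux_mul_ne_zero (a b : S.Branch) :
    ((S.mult a : ℝ≥0∞) * (S.mult b : ℝ≥0∞)) ≠ 0 := by
  have ha := (S.mult_pos a).ne'
  have hb := (S.mult_pos b).ne'
  simp [ha, hb]

lemma aux_d_top_of_eq (a : S.Branch) : S.d a a = ⊤ := by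
  unfold BranchSystem.d
  rw [(S.im_top_iff a a).2 rfl]
  exact ENNReal.top_div_of_ne_top (by
    exact ENNReal.mul_ne_top (ENNReal.natCast_ne_top _) (ENNReal.natCast_ne_top _))

lemma aux_ne_of_d_lt_top {a b : S.Branch} (h : S.d a b < ⊤) : a ≠ b := by
  rintro rfl
  rw [aux_d_top_of_eq] at h
  exact lt_irrefl _ h

/-- Ultrametric transfer: if `d a b < d a w` then `d b w = d a b`. -/
lemma aux_transfer (hU : S.Ultra) {a b w : S.Branch} (h : S.d a b < S.d a w) :
    S.d b w = S.d a b := by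
  have h1 : min (S.d b w) (S.d w a) ≤ S.d b a := hU b a w
  have h2 : min (S.d b a) (S.d a w) ≤ S.d b w := hU b w a
  rw [aux_d_symm S b a] at h1 h2
  rw [aux_d_symm S w a] at h1
  refine le_antisymm ?_ ?_
  · by_contra hc
    push_neg at hc
    have : min (S.d b w) (S.d a w) = S.d a w ∨ S.d b w ≤ S.d a b := by
      rcases le_total (S.d b w) (S.d a w) with hle | hle
      · exact Or.inr (le_trans (by simp [min_eq_left hle]) h1)
      · exact Or.inl (min_eq_right hle)
    rcases this with heq | hle
    · rw [heq] at h1; exact absurd h1 (not_le.mpr h)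
    · exact absurd hle (not_le.mpr hc)
  · calc S.d a b = min (S.d a b) (S.d a w) := (min_eq_left h.le).symm
      _ ≤ S.d b w := h2

lemma aux_exists_iInf_eq {ι : Type*} [Finite ι] [Nonempty ι] (f : ι → ℝ≥0∞) :
    ∃ i, f i = ⨅ j, f j := by
  obtain ⟨i, hi⟩ := Finite.exists_min f
  exact ⟨i, le_antisymm (le_iInf hi) (iInf_le f i)⟩

end Aux

/-- Corollary 3.5(3): for a reduced curve `C` with branches `C₁,…,Cᵣ`,
`d(C) < min_i d(Cᵢ)` if and only if `d(C)` is an integer. -/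
theorem dExpC_lt_iff_integer (S : BranchSystem) (hU : S.Ultra)
    (hattain : ∀ b : S.Branch, ∃ W, S.Smooth W ∧ S.d b W = S.dExp b)
    -- for a smooth branch the contact exponent is infinite
    (hsmooth : ∀ b, S.Smooth b → S.dExp b = ⊤)
    -- for a singular branch the contact exponent `v₁/v₀` is never an integer
    (hnotint : ∀ b, ¬ S.Smooth b → ∀ n : ℕ, S.dExp b ≠ (n : ℝ≥0∞))
    -- the contact of two distinct smooth branches is a positive integer
    (hsm_int : ∀ U V, S.Smooth U → S.Smooth V → U ≠ V → ∃ n : ℕ, S.d U V = (n : ℝ≥0∞))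
    {r : ℕ} (hr : 1 ≤ r) (C : Fin r → S.Branch) (hC : Function.Injective C) :
    S.dExpC C < (⨅ i, S.dExp (C i)) ↔ ∃ n : ℕ, S.dExpC C = (n : ℝ≥0∞) := by
  have hrne : Nonempty (Fin r) := ⟨⟨0, hr⟩⟩
  set m := ⨅ i, S.dExp (C i) with hm
  set E := ⨅ p : Fin r × Fin r, S.d (C p.1) (C p.2) with hE
  -- `dExpC C ≤ m`
  have hle_m : S.dExpC C ≤ m := by
    refine le_iInf fun i => ?_
    refine iSup_le fun W => iSup_le fun hW => ?_
    calc S.dC C W ≤ S.d (C i) W := iInf_le _ i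
      _ ≤ S.dExp (C i) := le_iSup₂_of_le W hW le_rfl
  -- `dExpC C ≤ E`
  have hle_E : S.dExpC C ≤ E := by
    refine le_iInf fun p => ?_
    refine iSup_le fun W => iSup_le fun hW => ?_
    have h1 : S.dC C W ≤ S.d (C p.1) W := iInf_le _ _
    have h2 : S.dC C W ≤ S.d W (C p.2) := by
      rw [← aux_d_symm]; exact iInf_le _ _
    exact le_trans (le_min h1 h2) (hU _ _ _)
  -- `min m E ≤ dExpC C`
  have hge : min m E ≤ S.dExpC C := by
    obtain ⟨i⟩ := hrne
    obtain ⟨W, hWs, hWd⟩ := hattain (C i)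
    have hstep : min m E ≤ S.dC C W := by
      refine le_iInf fun k => ?_
      have h3 : min (S.d (C k) (C i)) (S.d (C i) W) ≤ S.d (C k) W := hU _ _ _
      have h4 : E ≤ S.d (C k) (C i) := iInf_le _ (k, i)
      have h5 : m ≤ S.d (C i) W := by rw [hWd]; exact iInf_le _ i
      calc min m E ≤ min (S.d (C k) (C i)) (S.d (C i) W) :=
            le_min (le_trans (min_le_right _ _) h4) (le_trans (min_le_left _ _) h5)
        _ ≤ S.d (C k) W := h3
    exact le_trans hstep (le_iSup₂_of_le W hWs le_rfl)
  have hformula : S.dExpC C = min m E := le_antisymm (le_min hle_m hle_E) hge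
  constructor
  · -- strict inequality ⇒ integer
    intro hlt
    have hEm : E < m := by
      by_contra hc
      push_neg at hc
      rw [hformula, min_eq_left hc] at hlt
      exact lt_irrefl _ hlt
    have hdE : S.dExpC C = E := by rw [hformula, min_eq_right hEm.le]
    obtain ⟨p, hp⟩ := aux_exists_iInf_eq (fun p : Fin r × Fin r => S.d (C p.1) (C p.2))
    have hpE : S.d (C p.1) (C p.2) = E := hp
    have hEi : E < S.dExp (C p.1) := lt_of_lt_of_le hEm (iInf_le _ p.1)
    have hEj : E < S.dExp (C p.2) := lt_of_lt_of_le hEm (iInf_le _ p.2)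
    obtain ⟨Wi, hWis, hWid⟩ := hattain (C p.1)
    obtain ⟨Wj, hWjs, hWjd⟩ := hattain (C p.2)
    -- transfer: `d (C p.2) Wi = E`
    have h1 : S.d (C p.2) Wi = E := by
      have : S.d (C p.1) (C p.2) < S.d (C p.1) Wi := by
        rw [hpE, hWid]; exact hEi
      rw [aux_transfer S hU this, hpE]
    -- transfer: `d Wi Wj = E`
    have h2 : S.d Wi Wj = E := by
      have : S.d (C p.2) Wi < S.d (C p.2) Wj := by
        rw [h1, hWjd]; exact hEj
      rw [aux_transfer S hU this, h1]
    have hWij : Wi ≠ Wj := by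
      refine aux_ne_of_d_lt_top S ?_
      rw [h2]
      exact lt_of_lt_of_le hEm le_top
    obtain ⟨n, hn⟩ := hsm_int Wi Wj hWis hWjs hWij
    exact ⟨n, by rw [hdE, ← h2, hn]⟩
  · -- integer ⇒ strict inequality
    rintro ⟨n, hn⟩
    rcases lt_or_eq_of_le hle_m with hlt | heq
    · exact hlt
    · exfalso
      obtain ⟨i, hi⟩ := aux_exists_iInf_eq (fun i => S.dExp (C i))
      have hin : S.dExp (C i) = (n : ℝ≥0∞) := by rw [hi, ← hm, ← heq, hn]
      by_cases hs : S.Smooth (C i)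
      · rw [hsmooth _ hs] at hin
        exact (ENNReal.natCast_ne_top n) hin.symm
      · exact hnotint _ hs n hin
end

section
/- Let C be a reduced curve with r > 1 branches and W a smooth branch. If d(C,W) is not an integer, then d(C,W) = d(C). -/
open ENNReal

open BranchSystem

/-- Lemma 3.8: for a reduced curve `C` with `r > 1` branches and a smooth branch
`W`, if `d(C,W)` is not an integer then `d(C,W) = d(C)`. -/
theorem dC_eq_dExpC_of_not_integer (S : BranchSystem) (hU : S.Ultra)
    (hattain : ∀ b : S.Branch, ∃ W, S.Smooth W ∧ S.d b W = S.dExp b)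
    -- for a branch `B` and a smooth `W'`, `d(B,W') ∉ ℕ` implies `d(B,W') = d(B)`
    (hbranch : ∀ b W', S.Smooth W' → (∀ n : ℕ, S.d b W' ≠ (n : ℝ≥0∞)) →
      S.d b W' = S.dExp b)
    {r : ℕ} (hr : 1 < r) (C : Fin r → S.Branch) (hC : Function.Injective C)
    (W : S.Branch) (hW : S.Smooth W)
    (hnotint : ∀ n : ℕ, S.dC C W ≠ (n : ℝ≥0∞)) :
    S.dC C W = S.dExpC C := by
  have hne : Nonempty (Fin r) := ⟨⟨0, by omega⟩⟩
  obtain ⟨i0, hi0⟩ := Finite.exists_min (fun i => S.d (C i) W)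
  have hmin : S.dC C W = S.d (C i0) W :=
    le_antisymm (iInf_le _ _) (le_iInf hi0)
  have hkey : S.d (C i0) W = S.dExp (C i0) := by
    apply hbranch _ _ hW
    intro n
    rw [← hmin]; exact hnotint n
  apply le_antisymm
  · exact le_iSup_of_le W (le_iSup_of_le hW le_rfl)
  · apply iSup_le; intro W'; apply iSup_le; intro hW'
    calc S.dC C W' ≤ S.d (C i0) W' := iInf_le _ _
      _ ≤ S.dExp (C i0) := le_iSup_of_le W' (le_iSup_of_le hW' le_rfl)
      _ = S.dC C W := by rw [← hkey, hmin]
end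

section
/- Let C = ∪_{k=1}^t C_k, where each C_k is unitangent and C_k, C_l have distinct tangents for k ≠ l. Then μ(C) + t − 1 = m(C)(m(C) − 1) + Σ_{k=1}^t μ(Ĉ_k), where Ĉ_k is the strict quadratic transform of C_k (Pham's formula). -/
open ENNReal

open BranchSystem

/-- Milnor number of a curve with branches indexed by an arbitrary finite type,
via `μ(C) + r − 1 = Σᵢ μ(Cᵢ) + 2 Σ_{i<j} (Cᵢ,Cⱼ)₀`. -/
noncomputable def muI (S : BranchSystem) (μb : S.Branch → ℕ) {ι : Type}
    [Fintype ι] [DecidableEq ι] (C : ι → S.Branch) : ℝ≥0∞ :=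
  (∑ i, (μb (C i) : ℝ≥0∞)) + (∑ i, ∑ j, if i ≠ j then S.im (C i) (C j) else 0)
    - ((Fintype.card ι : ℝ≥0∞) - 1)

/-! Blowing up separates the tangent classes: two branches meet with multiplicity `m(a)m(b)`,
plus, when they share their tangent, the intersection number of their strict transforms.
Feeding this and `μ(b) = m(b)(m(b) − 1) + μ(b̂)` into `μ(C) + r − 1 = Σ μ(Cᵢ) + Σ_{i≠j} (Cᵢ,Cⱼ)₀`,
the multiplicity terms assemble into `Σ mᵢ(mᵢ − 1) + Σ_{i≠j} mᵢmⱼ = m(C)(m(C) − 1)`, the rest is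
`Σ_k (μ(Ĉ_k) + r_k − 1)`, and the branch counts balance: `(t − 1) + Σ_k (r_k − 1) = r − 1`.
Since subtraction in `ℝ≥0∞` truncates, the finite quantity `Σ_k (r_k − 1)` is added to both
sides instead of being subtracted. -/

open Finset

section OffDiag

variable {ι M : Type*} [Fintype ι] [DecidableEq ι] [AddCommMonoid M]

def offDiagSum (f : ι → ι → M) : M := ∑ i, ∑ j, if i ≠ j then f i j else 0

theorem offDiagSum_congr {f g : ι → ι → M} (h : ∀ i j, i ≠ j → f i j = g i j) :
    offDiagSum f = offDiagSum g := by
  unfold offDiagSum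
  refine sum_congr rfl fun i _ => sum_congr rfl fun j _ => ?_
  split_ifs with hij
  exacts [h i j hij, rfl]

theorem offDiagSum_add (f g : ι → ι → M) :
    offDiagSum (fun i j => f i j + g i j) = offDiagSum f + offDiagSum g := by
  simp only [offDiagSum, ← sum_add_distrib, ite_add_ite, add_zero]

theorem sum_diag_add_offDiagSum (f : ι → ι → M) :
    ∑ i, f i i + offDiagSum f = ∑ i, ∑ j, f i j := by
  simp only [offDiagSum, ← sum_add_distrib]
  refine sum_congr rfl fun i _ => ?_
  rw [sum_ite, filter_ne, sum_const_zero, add_zero, add_sum_erase _ _ (mem_univ i)]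

theorem offDiagSum_sigma_ite_fst_eq {κ : Type*} {α : κ → Type*} [Fintype κ] [DecidableEq κ]
    [∀ k, Fintype (α k)] [∀ k, DecidableEq (α k)] (g : (Σ k, α k) → (Σ k, α k) → M) :
    offDiagSum (fun p q => if p.1 = q.1 then g p q else 0) =
      ∑ k, offDiagSum (fun i j : α k => g ⟨k, i⟩ ⟨k, j⟩) := by
  simp only [offDiagSum, Fintype.sum_sigma]
  refine sum_congr rfl fun k _ => sum_congr rfl fun i _ => ?_
  rw [sum_eq_single k (fun l _ hl => sum_eq_zero fun j _ => by simp [Ne.symm hl])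
    (by simp)]
  refine sum_congr rfl fun j _ => ?_
  simp

end OffDiag

theorem Nat.sum_mul_sub_one_add_offDiagSum {ι : Type*} [Fintype ι] [DecidableEq ι] (f : ι → ℕ) :
    ∑ i, f i * (f i - 1) + offDiagSum (fun i j => f i * f j) = (∑ i, f i) * (∑ i, f i - 1) := by
  have mul_sub_one_add (n : ℕ) : n * (n - 1) + n = n * n := by
    rcases n with _ | n <;> simp [Nat.mul_succ]
  refine Nat.add_right_cancel (m := ∑ i, f i) ?_
  rw [mul_sub_one_add, sum_mul_sum, ← sum_diag_add_offDiagSum, add_right_comm,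
    ← sum_add_distrib]
  simp only [mul_sub_one_add]

theorem Nat.cast_offDiagSum {ι R : Type*} [Fintype ι] [DecidableEq ι]
    [AddCommMonoidWithOne R] (f : ι → ι → ℕ) :
    ((offDiagSum f : ℕ) : R) = offDiagSum (fun i j => (f i j : R)) := by
  simp only [offDiagSum, Nat.cast_sum, Nat.cast_ite, Nat.cast_zero]

theorem ENNReal.natCast_sub_one (n : ℕ) : (n : ℝ≥0∞) - 1 = ((n - 1 : ℕ) : ℝ≥0∞) := by
  rw [ENNReal.natCast_sub, Nat.cast_one]

theorem ENNReal.sum_mul_sub_one_add_offDiagSum {ι : Type*} [Fintype ι] [DecidableEq ι]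
    (f : ι → ℕ) :
    ∑ i, (f i : ℝ≥0∞) * ((f i : ℝ≥0∞) - 1) + offDiagSum (fun i j => (f i : ℝ≥0∞) * f j) =
      (∑ i, (f i : ℝ≥0∞)) * ((∑ i, (f i : ℝ≥0∞)) - 1) := by
  rw [← Nat.cast_sum]
  simp only [ENNReal.natCast_sub_one]
  rw [← Nat.cast_mul, ← Nat.sum_mul_sub_one_add_offDiagSum f]
  push_cast [Nat.cast_offDiagSum]
  rfl

theorem ENNReal.natCast_sub_one_add_sum_natCast_sub_one {κ : Type*} [Fintype κ] {n : κ → ℕ}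
    (hn : ∀ k, 1 ≤ n k) :
    ((Fintype.card κ : ℝ≥0∞) - 1) + ∑ k, ((n k : ℝ≥0∞) - 1) = ((∑ k, n k : ℕ) : ℝ≥0∞) - 1 := by
  rcases isEmpty_or_nonempty κ with _ | _
  · simp
  have hcard : 0 < Fintype.card κ := Fintype.card_pos
  have hsum : ∑ k, (n k - 1) + Fintype.card κ = ∑ k, n k := by
    rw [Fintype.card_eq_sum_ones, ← sum_add_distrib]
    exact sum_congr rfl fun k _ => Nat.sub_add_cancel (hn k)
  simp only [ENNReal.natCast_sub_one, ← Nat.cast_sum, ← Nat.cast_add]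
  exact congrArg _ (by omega)

theorem ENNReal.card_sub_one_le_offDiagSum {ι : Type*} [Fintype ι] [DecidableEq ι]
    {f : ι → ι → ℝ≥0∞} (hf : ∀ i j, i ≠ j → 1 ≤ f i j) :
    (Fintype.card ι : ℝ≥0∞) - 1 ≤ offDiagSum f := by
  rcases isEmpty_or_nonempty ι with _ | ⟨⟨i₀⟩⟩
  · simp
  calc (Fintype.card ι : ℝ≥0∞) - 1 = ∑ j, if i₀ ≠ j then 1 else 0 := by
        rw [sum_boole, filter_ne, card_erase_of_mem (mem_univ _), card_univ,
          ENNReal.natCast_sub_one]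
    _ ≤ ∑ j, if i₀ ≠ j then f i₀ j else 0 :=
        sum_le_sum fun j _ => by split_ifs with h; exacts [hf i₀ j h, le_rfl]
    _ ≤ offDiagSum f :=
        single_le_sum (f := fun i => ∑ j, if i ≠ j then f i j else 0)
          (fun _ _ => zero_le) (mem_univ i₀)

namespace BranchSystem

variable (S : BranchSystem)

theorem one_le_im (a b : S.Branch) : 1 ≤ S.im a b := by
  have ha : (1 : ℝ≥0∞) ≤ S.mult a := by exact_mod_cast S.mult_pos a
  have hb : (1 : ℝ≥0∞) ≤ S.mult b := by exact_mod_cast S.mult_pos b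
  exact (one_le_mul ha hb).trans (S.im_ge a b)

end BranchSystem

theorem muI_add_card_sub_one (S : BranchSystem) (μb : S.Branch → ℕ) {ι : Type} [Fintype ι]
    [DecidableEq ι] (C : ι → S.Branch) :
    muI S μb C + ((Fintype.card ι : ℝ≥0∞) - 1) =
      ∑ i, (μb (C i) : ℝ≥0∞) + offDiagSum (fun i j => S.im (C i) (C j)) :=
  tsub_add_cancel_of_le <| le_add_left <|
    ENNReal.card_sub_one_le_offDiagSum fun _ _ _ => S.one_le_im _ _

theorem pham_formula_general (S : BranchSystem)
    (sameTangent : S.Branch → S.Branch → Prop)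
    (blow : S.Branch → S.Branch)
    -- Noether's formula for branches with a common tangent
    (hNoether : ∀ a b, a ≠ b → sameTangent a b →
      S.im a b = (S.mult a : ℝ≥0∞) * (S.mult b : ℝ≥0∞) + S.im (blow a) (blow b))
    -- transversal branches intersect with multiplicity `m(a)m(b)`
    (hTrans : ∀ a b, a ≠ b → ¬ sameTangent a b →
      S.im a b = (S.mult a : ℝ≥0∞) * (S.mult b : ℝ≥0∞))
    (μb : S.Branch → ℕ)
    -- for a branch, `c(C) = m(C)(m(C)−1) + c(Ĉ)` (conductor under blow-up)
    (hblow_mu : ∀ b, (μb b : ℝ≥0∞) =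
      (S.mult b : ℝ≥0∞) * ((S.mult b : ℝ≥0∞) - 1) + (μb (blow b) : ℝ≥0∞))
    (t : ℕ) (r : Fin t → ℕ) (hr : ∀ k, 1 ≤ r k)
    (C : (k : Fin t) → Fin (r k) → S.Branch)
    (hC : Function.Injective (fun p : Σ k, Fin (r k) => C p.1 p.2))
    -- each `C_k` is unitangent
    (hUni : ∀ k i j, sameTangent (C k i) (C k j))
    -- distinct `C_k` have distinct tangents
    (hDist : ∀ k l i j, k ≠ l → ¬ sameTangent (C k i) (C l j)) :
    muI S μb (fun p : Σ k, Fin (r k) => C p.1 p.2) + ((t : ℝ≥0∞) - 1) =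
      (∑ p : Σ k, Fin (r k), (S.mult (C p.1 p.2) : ℝ≥0∞)) *
          ((∑ p : Σ k, Fin (r k), (S.mult (C p.1 p.2) : ℝ≥0∞)) - 1) +
        ∑ k, muI S μb (fun i => blow (C k i)) := by
  have im_eq : ∀ p q : Σ k, Fin (r k), p ≠ q →
      S.im (C p.1 p.2) (C q.1 q.2) = (S.mult (C p.1 p.2) : ℝ≥0∞) * S.mult (C q.1 q.2) +
        if p.1 = q.1 then S.im (blow (C p.1 p.2)) (blow (C q.1 q.2)) else 0 := by
    rintro ⟨k, i⟩ ⟨l, j⟩ hpq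
    have hne : C k i ≠ C l j := fun h => hpq (hC h)
    by_cases hkl : k = l
    · subst hkl
      rw [if_pos rfl, hNoether _ _ hne (hUni k i j)]
    · rw [if_neg hkl, add_zero, hTrans _ _ hne (hDist k l i j hkl)]
  have branch_count : ((t : ℝ≥0∞) - 1) + ∑ k, ((r k : ℝ≥0∞) - 1) =
      (Fintype.card (Σ k, Fin (r k)) : ℝ≥0∞) - 1 := by
    simpa using ENNReal.natCast_sub_one_add_sum_natCast_sub_one hr
  have muI_blow : ∀ k, muI S μb (fun i => blow (C k i)) + ((r k : ℝ≥0∞) - 1) =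
      ∑ i, (μb (blow (C k i)) : ℝ≥0∞) +
        offDiagSum (fun i j => S.im (blow (C k i)) (blow (C k j))) :=
    fun k => by simpa using muI_add_card_sub_one S μb (fun i => blow (C k i))
  have count_ne_top : ∑ k, ((r k : ℝ≥0∞) - 1) ≠ ⊤ := by
    simp only [ENNReal.natCast_sub_one, ← Nat.cast_sum]
    exact ENNReal.natCast_ne_top _
  rw [← ENNReal.add_left_inj count_ne_top, add_assoc, branch_count, muI_add_card_sub_one,
    add_assoc, ← sum_add_distrib, offDiagSum_congr im_eq, offDiagSum_add,
    offDiagSum_sigma_ite_fst_eq, ← ENNReal.sum_mul_sub_one_add_offDiagSum]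
  simp only [muI_blow, sum_add_distrib, hblow_mu (C _ _), Fintype.sum_sigma]
  ring

/-- Pham's formula: if `C = ⋃_{k=1}^t C_k` with each `C_k` unitangent and the
tangents of `C_k`, `C_l` distinct for `k ≠ l`, then
`μ(C) + t − 1 = m(C)(m(C) − 1) + Σ_k μ(Ĉ_k)`. -/
theorem pham_formula (S : BranchSystem)
    (sameTangent : S.Branch → S.Branch → Prop)
    (blow : S.Branch → S.Branch)
    -- Noether's formula for branches with a common tangent
    (hNoether : ∀ a b, a ≠ b → sameTangent a b →
      S.im a b = (S.mult a : ℝ≥0∞) * (S.mult b : ℝ≥0∞) + S.im (blow a) (blow b))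
    -- transversal branches intersect with multiplicity `m(a)m(b)`
    (hTrans : ∀ a b, a ≠ b → ¬ sameTangent a b →
      S.im a b = (S.mult a : ℝ≥0∞) * (S.mult b : ℝ≥0∞))
    (μb : S.Branch → ℕ)
    -- for a branch, `c(C) = m(C)(m(C)−1) + c(Ĉ)` (conductor under blow-up)
    (hblow_mu : ∀ b, (μb b : ℝ≥0∞) =
      (S.mult b : ℝ≥0∞) * ((S.mult b : ℝ≥0∞) - 1) + (μb (blow b) : ℝ≥0∞))
    (t : ℕ) (ht : 1 ≤ t) (r : Fin t → ℕ) (hr : ∀ k, 1 ≤ r k)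
    (C : (k : Fin t) → Fin (r k) → S.Branch)
    (hC : Function.Injective (fun p : Σ k, Fin (r k) => C p.1 p.2))
    -- each `C_k` is unitangent
    (hUni : ∀ k i j, sameTangent (C k i) (C k j))
    -- distinct `C_k` have distinct tangents
    (hDist : ∀ k l i j, k ≠ l → ¬ sameTangent (C k i) (C l j)) :
    muI S μb (fun p : Σ k, Fin (r k) => C p.1 p.2) + ((t : ℝ≥0∞) - 1) =
      (∑ p : Σ k, Fin (r k), (S.mult (C p.1 p.2) : ℝ≥0∞)) *
          ((∑ p : Σ k, Fin (r k), (S.mult (C p.1 p.2) : ℝ≥0∞)) - 1) +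
        ∑ k, muI S μb (fun i => blow (C k i)) :=
  pham_formula_general S sameTangent blow hNoether hTrans μb hblow_mu t r hr C hC hUni hDist
end
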